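/- Consider the ODE ẏ·x − (q_0/p)·y·ẋ = P(t) where x(t) is analytic of order p+r at t=0 and P is analytic of order ≥ q_1+p−1. If q_0(p+r)/p is not an integer, then any solution y analytic near t=0 is given by y = x^{q_0/p}·∫_0^t P(u)·x(u)^{−q_0/p−1}du (i.e., the integration constant must be 0), and consequently ord y ≥ q_1 − r. -/

import Mathlib

/-!
Write `z = X^m u` and `x = X^s v` with `u(0), v(0) ≠ 0`. Multiplying the operator
`z ↦ z' x - c z x'` by `X` gives `X^(m+s) ((m - c s) u v + X (u' v - c u v'))`, so as long as
`m - c s` never vanishes (for `c s = q₀(p+r)/p ∉ ℤ`) the operator shifts orders by exactly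
`s - 1`. In particular it is injective, which forces the integration constant to vanish, and
`ord y + s - 1 = ord P ≥ q₁ + p - 1`.
-/

open PowerSeries

/-- Formal derivative d/dt of a power series. -/
noncomputable def pderiv' (f : PowerSeries ℂ) : PowerSeries ℂ :=
  PowerSeries.mk fun n => ((n : ℂ) + 1) * coeff (n + 1) f

namespace PowerSeries

variable {R : Type*} [CommRing R]

noncomputable def weightedWronskian (c : R) (x z : R⟦X⟧) : R⟦X⟧ :=
  d⁄dX R z * x - C c * z * d⁄dX R x

theorem weightedWronskian_sub (c : R) (x z z' : R⟦X⟧) :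
    weightedWronskian c x (z - z') = weightedWronskian c x z - weightedWronskian c x z' := by
  simp only [weightedWronskian, map_sub]
  ring

theorem X_mul_derivative_X_pow_mul (m : ℕ) (u : R⟦X⟧) :
    X * d⁄dX R (X ^ m * u) = X ^ m * (C (m : R) * u + X * d⁄dX R u) := by
  rcases m with _ | m
  · simp
  · rw [Derivation.leibniz, derivative_pow, derivative_X, smul_eq_mul, smul_eq_mul, map_natCast]
    simp only [Nat.add_sub_cancel, Nat.cast_add, Nat.cast_one, pow_succ]
    ring

theorem X_mul_weightedWronskian_X_pow_mul (c : R) (m s : ℕ) (u v : R⟦X⟧) :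
    X * weightedWronskian c (X ^ s * v) (X ^ m * u) =
      X ^ (m + s) * (C ((m : R) - c * s) * u * v + X * weightedWronskian c v u) := by
  have hz := X_mul_derivative_X_pow_mul m u
  have hx := X_mul_derivative_X_pow_mul s v
  simp only [weightedWronskian, map_sub, map_mul] at *
  linear_combination (X ^ s * v) * hz - C c * X ^ m * u * hx

variable [IsDomain R]

theorem order_weightedWronskian_add_one {c : R} {s : ℕ} (hc : ∀ m : ℕ, (m : R) ≠ c * s)
    {x : R⟦X⟧} (hx : x.order = s) (z : R⟦X⟧) :
    (weightedWronskian c x z).order + 1 = z.order + s := by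
  rcases eq_or_ne z 0 with rfl | hz
  · simp [weightedWronskian]
  have hx0 : x ≠ 0 := by rintro rfl; simp at hx
  set m := z.order.toNat
  have hxs : X ^ s * divXPowOrder x = x := by
    simpa [hx] using X_pow_order_mul_divXPowOrder (f := x)
  have hlead : constantCoeff
      (C ((m : R) - c * s) * divXPowOrder z * divXPowOrder x +
        X * weightedWronskian c (divXPowOrder x) (divXPowOrder z)) ≠ 0 := by
    simp [sub_eq_zero, hc m, constantCoeff_divXPowOrder_eq_zero_iff, hz, hx0]
  have key := congrArg order
    (X_mul_weightedWronskian_X_pow_mul c m s (divXPowOrder z) (divXPowOrder x))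
  rw [hxs, X_pow_order_mul_divXPowOrder, order_mul, order_mul, order_X, order_X_pow,
    not_not.mp (order_ne_zero_iff_constCoeff_eq_zero.not.mpr hlead)] at key
  rw [← coe_toNat_order hz, add_comm, key]
  simp [m]

theorem weightedWronskian_injective {c : R} {s : ℕ} (hc : ∀ m : ℕ, (m : R) ≠ c * s)
    {x : R⟦X⟧} (hx : x.order = s) : Function.Injective (weightedWronskian c x) := by
  intro z z' h
  have key := order_weightedWronskian_add_one hc hx (z - z')
  rw [weightedWronskian_sub, h, sub_self, order_zero, top_add, eq_comm,
    ENat.add_eq_top, or_iff_left (ENat.natCast_ne_top s), order_eq_top] at key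
  exact sub_eq_zero.mp key

end PowerSeries

theorem pderiv'_eq_derivative : pderiv' = d⁄dX ℂ := by
  ext f n
  simp [pderiv', coeff_derivative, mul_comm]

theorem natCast_ne_div_mul_of_not_dvd {K : Type*} [Field K] [CharZero K] {a b d : ℕ}
    (hd : d ≠ 0) (h : ¬ (d : ℤ) ∣ a * b) (m : ℕ) : (m : K) ≠ a / d * b := by
  intro hm
  refine h ⟨m, ?_⟩
  have : (a * b : K) = d * m := by rw [hm]; field_simp
  exact_mod_cast this

theorem stmt8_general (p q0 q1 r : ℕ) (hp : 0 < p)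
    (hnotint : ¬ (p : ℤ) ∣ (q0 * (p + r) : ℤ))
    (x P y : PowerSeries ℂ)
    (hx : x.order = (p + r : ℕ))
    (hP : ((q1 + p - 1 : ℕ) : ℕ∞) ≤ P.order)
    (hode : pderiv' y * x - C ((q0 : ℂ) / p) * y * pderiv' x = P) :
    (∀ y' : PowerSeries ℂ,
        pderiv' y' * x - C ((q0 : ℂ) / p) * y' * pderiv' x = P → y' = y) ∧
    ((q1 - r : ℕ) : ℕ∞) ≤ y.order := by
  have hc : ∀ m : ℕ, (m : ℂ) ≠ (q0 : ℂ) / p * (p + r : ℕ) :=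
    natCast_ne_div_mul_of_not_dvd hp.ne' (by exact_mod_cast hnotint)
  rw [pderiv'_eq_derivative] at hode ⊢
  refine ⟨fun y' hode' => weightedWronskian_injective hc hx (hode'.trans hode.symm), ?_⟩
  have hord := order_weightedWronskian_add_one hc hx y
  rw [show weightedWronskian _ x y = P from hode] at hord
  cases hy : y.order with
  | top => simp
  | coe m =>
    rw [hy] at hord
    lift P.order to ℕ using (by rintro h; simp [h, eq_comm] at hord) with k
    norm_cast at hord hP ⊢
    omega

/-- Consider the ODE ẏ·x − (q₀/p)·y·ẋ = P where x is analytic of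
order p+r at t=0 and P is analytic of order ≥ q₁+p−1. If q₀(p+r)/p ∉ ℤ, then
the analytic solution is uniquely determined (it is
x^{q₀/p}·∫₀ᵗ P·x^{−q₀/p−1}, the integration constant being forced to 0), and
consequently ord y ≥ q₁ − r. -/
theorem stmt8 (p q0 q1 r : ℕ) (hp : 0 < p) (hq0 : 0 < q0) (hr : 0 < r)
    (hq : q0 < q1)
    (hnotint : ¬ (p : ℤ) ∣ (q0 * (p + r) : ℤ))
    (x P y : PowerSeries ℂ)
    (hx : x.order = (p + r : ℕ))
    (hP : ((q1 + p - 1 : ℕ) : ℕ∞) ≤ P.order)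
    (hode : pderiv' y * x - C ((q0 : ℂ) / p) * y * pderiv' x = P) :
    (∀ y' : PowerSeries ℂ,
        pderiv' y' * x - C ((q0 : ℂ) / p) * y' * pderiv' x = P → y' = y) ∧
    ((q1 - r : ℕ) : ℕ∞) ≤ y.order :=
  stmt8_general p q0 q1 r hp hnotint x P y hx hP hode
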